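/- Let f₀, f_T be smooth and T > 0. Then the 1-D two-point boundary value problem u_tt = u_xx, u(0,x)=f₀(x), u(T,x)=f_T(x) on [0,T]×ℝ, if it admits one C² solution, admits infinitely many C² solutions; more precisely, the map v ↦ u from inputs v = u_t(0,·) (satisfying the integral and endpoint compatibility conditions of Theorem 1 on [−T,T], extended by the recurrence) to C² solutions given by the D'Alembert formula is a bijection. -/

import Mathlib

/-- Admissible inputs: `v` is `C¹` on the decision interval `[-T,T]`, satisfies the
integral and endpoint compatibility conditions there, and is extended to `ℝ` by the
recurrence relation. -/
def admissibleInputs (f0 fT : ℝ → ℝ) (T : ℝ) : Set (ℝ → ℝ) :=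
  {v : ℝ → ℝ |
    ContDiffOn ℝ 1 v (Set.Icc (-T) T) ∧
    (∀ x : ℝ, v (x + T) = v (x - T) + 2 * deriv fT x - deriv f0 (x + T) - deriv f0 (x - T)) ∧
    (∫ x in (-T)..T, v x) = 2 * fT 0 - f0 T - f0 (-T) ∧
    v T = v (-T) + 2 * deriv fT 0 - deriv f0 T - deriv f0 (-T) ∧
    derivWithin v (Set.Icc (-T) T) T
      = derivWithin v (Set.Icc (-T) T) (-T)
        + 2 * deriv (deriv fT) 0 - deriv (deriv f0) T - deriv (deriv f0) (-T)}

/-- `C²` solutions of the two-point boundary value problem for the 1-D wave equation. -/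
def tbvpSolutions (f0 fT : ℝ → ℝ) (T : ℝ) : Set (ℝ → ℝ → ℝ) :=
  {u : ℝ → ℝ → ℝ |
    ContDiff ℝ 2 (fun p : ℝ × ℝ => u p.1 p.2) ∧
    (∀ t x : ℝ, deriv (deriv (fun s => u s x)) t = deriv (deriv (fun y => u t y)) x) ∧
    (∀ x : ℝ, u 0 x = f0 x) ∧ (∀ x : ℝ, u T x = fT x)}

/-- The D'Alembert map sending an input `v = u_t(0,·)` to the corresponding solution. -/
noncomputable def dAlembert (f0 : ℝ → ℝ) (v : ℝ → ℝ) : ℝ → ℝ → ℝ :=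
  fun t x => (f0 (x + t) + f0 (x - t)) / 2 + (1 / 2) * ∫ s in (x - t)..(x + t), v s
open Set

section partials
variable {W : ℝ × ℝ → ℝ}

lemma line1 (t x : ℝ) : HasDerivAt (fun s : ℝ => (s, x)) ((1:ℝ), (0:ℝ)) t :=
  (hasDerivAt_id t).prodMk (hasDerivAt_const t x)

lemma line2 (t x : ℝ) : HasDerivAt (fun y : ℝ => (t, y)) ((0:ℝ), (1:ℝ)) x :=
  (hasDerivAt_const x t).prodMk (hasDerivAt_id x)

lemma hasDerivAt_partial1 (hW : Differentiable ℝ W) (t x : ℝ) :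
    HasDerivAt (fun s => W (s, x)) (fderiv ℝ W (t, x) (1, 0)) t :=
  (hW (t, x)).hasFDerivAt.comp_hasDerivAt t (line1 t x)

lemma hasDerivAt_partial2 (hW : Differentiable ℝ W) (t x : ℝ) :
    HasDerivAt (fun y => W (t, y)) (fderiv ℝ W (t, x) (0, 1)) x :=
  (hW (t, x)).hasFDerivAt.comp_hasDerivAt x (line2 t x)

lemma contDiff_fderiv_apply (hW : ContDiff ℝ 2 W) (e : ℝ × ℝ) :
    ContDiff ℝ 1 (fun p => fderiv ℝ W p e) :=
  (hW.fderiv_right (by norm_num)).clm_apply contDiff_const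

lemma fderiv_fderiv_apply (hW : ContDiff ℝ 2 W) (e : ℝ × ℝ) (q a : ℝ × ℝ) :
    fderiv ℝ (fun p => fderiv ℝ W p e) q a = (fderiv ℝ (fderiv ℝ W) q a) e := by
  have hc : DifferentiableAt ℝ (fderiv ℝ W) q :=
    ((hW.fderiv_right (le_refl _ : (1:WithTop ℕ∞) + 1 ≤ 2)).differentiable one_ne_zero) q
  have := fderiv_clm_apply (x := q) (c := fderiv ℝ W) (u := fun _ => e) hc
    (differentiableAt_const e)
  rw [show (fun y => fderiv ℝ W y e) = (fun y => fderiv ℝ W y ((fun _ => e) y)) from rfl, this]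
  simp

lemma second_symm (hW : ContDiff ℝ 2 W) (q a b : ℝ × ℝ) :
    (fderiv ℝ (fderiv ℝ W) q a) b = (fderiv ℝ (fderiv ℝ W) q b) a := by
  have hdiff : Differentiable ℝ W := hW.differentiable (by norm_num)
  have hc : DifferentiableAt ℝ (fderiv ℝ W) q :=
    ((hW.fderiv_right (le_refl _ : (1:WithTop ℕ∞) + 1 ≤ 2)).differentiable one_ne_zero) q
  exact second_derivative_symmetric (fun y => (hdiff y).hasFDerivAt) hc.hasFDerivAt a b

lemma secondPartial_tt (hW : ContDiff ℝ 2 W) (t x : ℝ) :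
    deriv (deriv (fun s => W (s, x))) t = fderiv ℝ (fderiv ℝ W) (t, x) (1, 0) (1, 0) := by
  have hdiff : Differentiable ℝ W := hW.differentiable (by norm_num)
  have h1 : deriv (fun s => W (s, x)) = fun s => fderiv ℝ W (s, x) (1, 0) :=
    funext fun s => (hasDerivAt_partial1 hdiff s x).deriv
  rw [h1]
  have hW1 : Differentiable ℝ (fun p : ℝ × ℝ => fderiv ℝ W p (1, 0)) :=
    (contDiff_fderiv_apply hW _).differentiable one_ne_zero
  have := (hasDerivAt_partial1 hW1 t x).deriv
  rw [this, fderiv_fderiv_apply hW]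

lemma secondPartial_xx (hW : ContDiff ℝ 2 W) (t x : ℝ) :
    deriv (deriv (fun y => W (t, y))) x = fderiv ℝ (fderiv ℝ W) (t, x) (0, 1) (0, 1) := by
  have hdiff : Differentiable ℝ W := hW.differentiable (by norm_num)
  have h1 : deriv (fun y => W (t, y)) = fun y => fderiv ℝ W (t, y) (0, 1) :=
    funext fun y => (hasDerivAt_partial2 hdiff t y).deriv
  rw [h1]
  have hW1 : Differentiable ℝ (fun p : ℝ × ℝ => fderiv ℝ W p (0, 1)) :=
    (contDiff_fderiv_apply hW _).differentiable one_ne_zero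
  have := (hasDerivAt_partial2 hW1 t x).deriv
  rw [this, fderiv_fderiv_apply hW]

lemma transportP (hW : ContDiff ℝ 2 W)
    (hwave : ∀ q : ℝ × ℝ, fderiv ℝ (fderiv ℝ W) q (1, 0) (1, 0)
      = fderiv ℝ (fderiv ℝ W) q (0, 1) (0, 1)) (t x : ℝ) :
    fderiv ℝ W (t, x) (1, 1) = fderiv ℝ W (0, x + t) (1, 1) := by
  set φ : ℝ → ℝ := fun s => fderiv ℝ W (s, x + t - s) (1, 1) with hφ
  have hW1 : Differentiable ℝ (fun p : ℝ × ℝ => fderiv ℝ W p (1, 1)) :=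
    (contDiff_fderiv_apply hW _).differentiable one_ne_zero
  have hline : ∀ s : ℝ, HasDerivAt (fun s : ℝ => (s, x + t - s)) ((1:ℝ), (-1:ℝ)) s := by
    intro s
    have := (hasDerivAt_id s).prodMk ((hasDerivAt_const s (x + t)).sub (hasDerivAt_id s))
    simpa using this
  have hd : ∀ s : ℝ, HasDerivAt φ
      (fderiv ℝ (fun p : ℝ × ℝ => fderiv ℝ W p (1, 1)) (s, x + t - s) (1, -1)) s := fun s =>
    ((hW1 _).hasFDerivAt.comp_hasDerivAt s (hline s))
  have hzero : ∀ s : ℝ, deriv φ s = 0 := by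
    intro s
    rw [(hd s).deriv, fderiv_fderiv_apply hW]
    have he : ((1:ℝ), (-1:ℝ)) = ((1:ℝ), (0:ℝ)) - ((0:ℝ), (1:ℝ)) := by
      simp [Prod.ext_iff]
    have he2 : ((1:ℝ), (1:ℝ)) = ((1:ℝ), (0:ℝ)) + ((0:ℝ), (1:ℝ)) := by
      simp [Prod.ext_iff]
    rw [he, he2, map_sub]
    simp only [ContinuousLinearMap.sub_apply, map_add]
    rw [hwave, second_symm hW _ (0, 1) (1, 0)]
    ring
  have hconst := is_const_of_deriv_eq_zero (fun s => (hd s).differentiableAt) hzero t 0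
  simpa [hφ] using hconst

lemma transportQ (hW : ContDiff ℝ 2 W)
    (hwave : ∀ q : ℝ × ℝ, fderiv ℝ (fderiv ℝ W) q (1, 0) (1, 0)
      = fderiv ℝ (fderiv ℝ W) q (0, 1) (0, 1)) (t x : ℝ) :
    fderiv ℝ W (t, x) (1, -1) = fderiv ℝ W (0, x - t) (1, -1) := by
  set φ : ℝ → ℝ := fun s => fderiv ℝ W (s, x - t + s) (1, -1) with hφ
  have hW1 : Differentiable ℝ (fun p : ℝ × ℝ => fderiv ℝ W p (1, -1)) :=
    (contDiff_fderiv_apply hW _).differentiable one_ne_zero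
  have hline : ∀ s : ℝ, HasDerivAt (fun s : ℝ => (s, x - t + s)) ((1:ℝ), (1:ℝ)) s := by
    intro s
    have := (hasDerivAt_id s).prodMk ((hasDerivAt_const s (x - t)).add (hasDerivAt_id s))
    simpa using this
  have hd : ∀ s : ℝ, HasDerivAt φ
      (fderiv ℝ (fun p : ℝ × ℝ => fderiv ℝ W p (1, -1)) (s, x - t + s) (1, 1)) s := fun s =>
    ((hW1 _).hasFDerivAt.comp_hasDerivAt s (hline s))
  have hzero : ∀ s : ℝ, deriv φ s = 0 := by
    intro s
    rw [(hd s).deriv, fderiv_fderiv_apply hW]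
    have he : ((1:ℝ), (-1:ℝ)) = ((1:ℝ), (0:ℝ)) - ((0:ℝ), (1:ℝ)) := by
      simp [Prod.ext_iff]
    have he2 : ((1:ℝ), (1:ℝ)) = ((1:ℝ), (0:ℝ)) + ((0:ℝ), (1:ℝ)) := by
      simp [Prod.ext_iff]
    rw [he, he2, map_add]
    simp only [ContinuousLinearMap.add_apply, map_sub]
    rw [hwave, second_symm hW _ (0, 1) (1, 0)]
    ring
  have hconst := is_const_of_deriv_eq_zero (fun s => (hd s).differentiableAt) hzero t 0
  simpa [hφ] using hconst

lemma decomp1 (hW : Differentiable ℝ W) (q : ℝ × ℝ) :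
    fderiv ℝ W q (1, 0) = (fderiv ℝ W q (1, 1) + fderiv ℝ W q (1, -1)) / 2 := by
  have : ((1:ℝ), (1:ℝ)) + ((1:ℝ), (-1:ℝ)) = (2:ℝ) • ((1:ℝ), (0:ℝ)) := by
    simp [Prod.ext_iff]; norm_num
  rw [← map_add, this, map_smul]
  simp

lemma decomp2 (hW : Differentiable ℝ W) (q : ℝ × ℝ) :
    fderiv ℝ W q (0, 1) = (fderiv ℝ W q (1, 1) - fderiv ℝ W q (1, -1)) / 2 := by
  have : ((1:ℝ), (1:ℝ)) - ((1:ℝ), (-1:ℝ)) = (2:ℝ) • ((0:ℝ), (1:ℝ)) := by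
    simp [Prod.ext_iff]; norm_num
  rw [← map_sub, this, map_smul]
  simp

end partials

section glue
variable {v G : ℝ → ℝ} {L : ℝ}

lemma shiftUp (hG : ContDiff ℝ 1 G) (hrec : ∀ y, v (y + L) = v y + G y)
    {c : ℝ} (hv : ContDiffOn ℝ 1 v (Icc c (c + L)))
    {p : ℝ} (hp : p ∈ Icc (c + L) (c + L + L)) :
    HasDerivWithinAt v (derivWithin v (Icc c (c + L)) (p - L) + deriv G (p - L))
      (Icc (c + L) (c + L + L)) p := by
  simp only [mem_Icc] at hp
  have hq : p - L ∈ Icc c (c + L) := by simp only [mem_Icc]; constructor <;> linarith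
  have h1 : HasDerivWithinAt v (derivWithin v (Icc c (c + L)) (p - L)) (Icc c (c + L)) (p - L) :=
    ((hv.differentiableOn one_ne_zero) _ hq).hasDerivWithinAt
  have hmaps : MapsTo (fun y => y - L) (Icc (c + L) (c + L + L)) (Icc c (c + L)) := by
    intro y hy; simp only [mem_Icc] at hy ⊢; constructor <;> linarith
  have hinner : HasDerivWithinAt (fun y : ℝ => y - L) 1 (Icc (c + L) (c + L + L)) p := by
    simpa using ((hasDerivAt_id p).sub_const L).hasDerivWithinAt
  have h2 := h1.comp p hinner hmaps
  have h3 : HasDerivAt (fun y => G (y - L)) (deriv G (p - L) * 1) p :=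
    ((hG.differentiable one_ne_zero (p - L)).hasDerivAt.comp p ((hasDerivAt_id p).sub_const L))
  have h4 := h2.add h3.hasDerivWithinAt
  have h5 : ∀ y : ℝ, v y = (v ∘ fun y => y - L) y + G (y - L) := by
    intro y; simpa using hrec (y - L)
  have := h4.congr (fun y _ => h5 y) (h5 p)
  simpa [mul_one] using this

lemma shiftDown (hG : ContDiff ℝ 1 G) (hrec : ∀ y, v (y + L) = v y + G y)
    {c : ℝ} (hv : ContDiffOn ℝ 1 v (Icc c (c + L)))
    {p : ℝ} (hp : p ∈ Icc (c - L) (c - L + L)) :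
    HasDerivWithinAt v (derivWithin v (Icc c (c + L)) (p + L) - deriv G p)
      (Icc (c - L) (c - L + L)) p := by
  simp only [mem_Icc] at hp
  have hq : p + L ∈ Icc c (c + L) := by simp only [mem_Icc]; constructor <;> linarith
  have h1 : HasDerivWithinAt v (derivWithin v (Icc c (c + L)) (p + L)) (Icc c (c + L)) (p + L) :=
    ((hv.differentiableOn one_ne_zero) _ hq).hasDerivWithinAt
  have hmaps : MapsTo (fun y => y + L) (Icc (c - L) (c - L + L)) (Icc c (c + L)) := by
    intro y hy; simp only [mem_Icc] at hy ⊢; constructor <;> linarith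
  have hinner : HasDerivWithinAt (fun y : ℝ => y + L) 1 (Icc (c - L) (c - L + L)) p := by
    simpa using ((hasDerivAt_id p).add_const L).hasDerivWithinAt
  have h2 := h1.comp p hinner hmaps
  have h3 : HasDerivAt (fun y => G y) (deriv G p) p :=
    (hG.differentiable one_ne_zero p).hasDerivAt
  have h4 := h2.sub h3.hasDerivWithinAt
  have h5 : ∀ y : ℝ, v y = (v ∘ fun y => y + L) y - G y := by
    intro y; have := hrec y; simp only [Function.comp]; linarith
  have := h4.congr (fun y _ => h5 y) (h5 p)
  simpa [mul_one] using this

/-- The conjunction carried along the induction. -/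
def GlueP (v G : ℝ → ℝ) (L c : ℝ) : Prop :=
  ContDiffOn ℝ 1 v (Icc c (c + L)) ∧
  derivWithin v (Icc c (c + L)) (c + L) = derivWithin v (Icc c (c + L)) c + deriv G c

lemma stepUp (hL : 0 < L) (hG : ContDiff ℝ 1 G) (hrec : ∀ y, v (y + L) = v y + G y)
    {c : ℝ} (h : GlueP v G L c) :
    GlueP v G L (c + L) ∧
      derivWithin v (Icc (c + L) (c + L + L)) (c + L) = derivWithin v (Icc c (c + L)) (c + L) := by
  obtain ⟨h1, h2⟩ := h
  have key := fun p hp => shiftUp hG hrec h1 (p := p) hp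
  have hC : ContDiffOn ℝ 1 v (Icc (c + L) (c + L + L)) := by
    have h5 : ∀ y ∈ Icc (c + L) (c + L + L), v y = v (y - L) + G (y - L) := by
      intro y _; simpa using hrec (y - L)
    have hmaps : MapsTo (fun y : ℝ => y - L) (Icc (c + L) (c + L + L)) (Icc c (c + L)) := by
      intro y hy; simp only [mem_Icc] at hy ⊢; constructor <;> linarith
    have hsub : ContDiffOn ℝ 1 (fun y : ℝ => y - L) (Icc (c + L) (c + L + L)) :=
      (contDiff_id.sub contDiff_const).contDiffOn
    have := ((h1.comp hsub hmaps).add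
      ((hG.contDiffOn).comp hsub (hmaps.mono_right (subset_univ _)))).congr h5
    simpa [Function.comp] using this
  have hud : UniqueDiffOn ℝ (Icc (c + L) (c + L + L)) := uniqueDiffOn_Icc (by linarith)
  have hhi : c + L + L ∈ Icc (c + L) (c + L + L) := by simp only [mem_Icc]; constructor <;> linarith
  have hlo : c + L ∈ Icc (c + L) (c + L + L) := by simp only [mem_Icc]; constructor <;> linarith
  have dhi := (key _ hhi).derivWithin (hud _ hhi)
  have dlo := (key _ hlo).derivWithin (hud _ hlo)
  rw [show c + L + L - L = c + L by ring] at dhi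
  rw [show c + L - L = c by ring] at dlo
  refine ⟨⟨hC, ?_⟩, ?_⟩
  · rw [dhi, dlo, h2]
  · rw [dlo, h2]

lemma stepDown (hL : 0 < L) (hG : ContDiff ℝ 1 G) (hrec : ∀ y, v (y + L) = v y + G y)
    {c : ℝ} (h : GlueP v G L c) :
    GlueP v G L (c - L) ∧
      derivWithin v (Icc (c - L) (c - L + L)) (c - L + L) = derivWithin v (Icc c (c + L)) c := by
  obtain ⟨h1, h2⟩ := h
  have key := fun p hp => shiftDown hG hrec h1 (p := p) hp
  have hC : ContDiffOn ℝ 1 v (Icc (c - L) (c - L + L)) := by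
    have h5 : ∀ y ∈ Icc (c - L) (c - L + L), v y = v (y + L) - G y := by
      intro y _; have := hrec y; linarith
    have hmaps : MapsTo (fun y : ℝ => y + L) (Icc (c - L) (c - L + L)) (Icc c (c + L)) := by
      intro y hy; simp only [mem_Icc] at hy ⊢; constructor <;> linarith
    have hadd : ContDiffOn ℝ 1 (fun y : ℝ => y + L) (Icc (c - L) (c - L + L)) :=
      (contDiff_id.add contDiff_const).contDiffOn
    have := ((h1.comp hadd hmaps).sub hG.contDiffOn).congr h5
    simpa [Function.comp] using this
  have hud : UniqueDiffOn ℝ (Icc (c - L) (c - L + L)) := uniqueDiffOn_Icc (by linarith)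
  have hhi : c - L + L ∈ Icc (c - L) (c - L + L) := by simp only [mem_Icc]; constructor <;> linarith
  have hlo : c - L ∈ Icc (c - L) (c - L + L) := by simp only [mem_Icc]; constructor <;> linarith
  have dhi := (key _ hhi).derivWithin (hud _ hhi)
  have dlo := (key _ hlo).derivWithin (hud _ hlo)
  rw [show c - L + L + L = c + L by ring, show c - L + L = c by ring] at dhi
  rw [show c - L + L = c by ring] at dlo
  refine ⟨⟨hC, ?_⟩, ?_⟩
  · rw [show c - L + L = c by ring, dhi, dlo, h2]; ring
  · rw [show c - L + L = c by ring, dhi, h2]; ring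

lemma junctionDeriv (hL : 0 < L) (hG : ContDiff ℝ 1 G) (hrec : ∀ y, v (y + L) = v y + G y)
    {c : ℝ} (h : GlueP v G L c) :
    HasDerivAt v (derivWithin v (Icc c (c + L)) (c + L)) (c + L) := by
  obtain ⟨h1, h2⟩ := h
  have hhi : c + L ∈ Icc c (c + L) := by simp only [mem_Icc]; constructor <;> linarith
  have hleft : HasDerivWithinAt v (derivWithin v (Icc c (c + L)) (c + L)) (Icc c (c + L)) (c + L) :=
    ((h1.differentiableOn one_ne_zero) _ hhi).hasDerivWithinAt
  have hmem : c + L ∈ Icc (c + L) (c + L + L) := by simp only [mem_Icc]; constructor <;> linarith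
  have hright := shiftUp hG hrec h1 hmem
  rw [show c + L - L = c by ring] at hright
  rw [← h2] at hright
  have hunion := hleft.union hright
  rw [Icc_union_Icc_eq_Icc (by linarith : c ≤ c + L) (by linarith : c + L ≤ c + L + L)] at hunion
  exact hunion.hasDerivAt (Icc_mem_nhds (by linarith) (by linarith))

/-- A function satisfying the recurrence `v (y + L) = v y + G y` which is `C¹` on a closed
fundamental interval with matching endpoint derivative is `C¹` on all of `ℝ`. -/
lemma glue_contDiff {a : ℝ} (hL : 0 < L) (hG : ContDiff ℝ 1 G)
    (hrec : ∀ y, v (y + L) = v y + G y) (h0 : GlueP v G L a) : ContDiff ℝ 1 v := by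
  have M : ∀ n : ℤ, GlueP v G L (a + n * L) := by
    intro n
    induction n using Int.induction_on with
    | zero => simpa using h0
    | succ k ih =>
      rw [show (a + ((k : ℤ) + 1 : ℤ) * L : ℝ) = a + (k : ℤ) * L + L by push_cast; ring]
      exact (stepUp hL hG hrec ih).1
    | pred k ih =>
      rw [show (a + (-(k : ℤ) - 1 : ℤ) * L : ℝ) = a + (-(k : ℤ) : ℤ) * L - L by push_cast; ring]
      exact (stepDown hL hG hrec ih).1
  have hdAt : ∀ (n : ℤ) (p : ℝ), p ∈ Ico (a + n * L) (a + n * L + L) →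
      HasDerivAt v (derivWithin v (Icc (a + n * L) (a + n * L + L)) p) p := by
    intro n p hp
    simp only [mem_Ico] at hp
    rcases eq_or_lt_of_le hp.1 with he | hlt
    · -- p is the left endpoint: junction with the interval below
      have hgp : GlueP v G L (a + n * L - L) := by
        have := M (n - 1)
        rwa [show (a + ((n : ℤ) - 1 : ℤ) * L : ℝ) = a + n * L - L by push_cast; ring] at this
      have hj := junctionDeriv hL hG hrec hgp
      have h3 := (stepDown hL hG hrec (M n)).2
      rw [show a + n * L - L + L = a + n * L by ring] at hj h3
      rw [h3] at hj
      rwa [← he]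
    · exact ((((M n).1.differentiableOn one_ne_zero) p
        ⟨le_of_lt hlt, le_of_lt hp.2⟩).hasDerivWithinAt).hasDerivAt
        (Icc_mem_nhds hlt hp.2)
  have cover : ∀ p : ℝ, ∃ n : ℤ, p ∈ Ico (a + n * L) (a + n * L + L) := by
    intro p
    refine ⟨⌊(p - a) / L⌋, ?_, ?_⟩
    · have h1 := Int.floor_le ((p - a) / L)
      have := (le_div_iff₀ hL).1 h1
      linarith
    · have h1 := Int.lt_floor_add_one ((p - a) / L)
      have := (div_lt_iff₀ hL).1 h1
      push_cast at this ⊢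
      nlinarith
  have hdiff : Differentiable ℝ v := by
    intro p
    obtain ⟨n, hn⟩ := cover p
    exact (hdAt n p hn).differentiableAt
  have hderiv_eq : ∀ n : ℤ, ∀ p ∈ Icc (a + n * L) (a + n * L + L),
      deriv v p = derivWithin v (Icc (a + n * L) (a + n * L + L)) p := by
    intro n p hp
    rcases lt_or_eq_of_le hp.2 with hlt | he
    · exact (hdAt n p ⟨hp.1, hlt⟩).deriv
    · have hj := junctionDeriv hL hG hrec (M n)
      rw [he]; exact hj.deriv
  have hcontOn : ∀ n : ℤ, ContinuousOn (deriv v) (Icc (a + n * L) (a + n * L + L)) := by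
    intro n
    have h1 := (M n).1.continuousOn_derivWithin (uniqueDiffOn_Icc (by linarith)) le_rfl
    exact h1.congr (hderiv_eq n)
  have hcont : Continuous (deriv v) := by
    rw [continuous_iff_continuousAt]
    intro p
    obtain ⟨n, hn⟩ := cover p
    simp only [mem_Ico] at hn
    have hK : ContinuousOn (deriv v) (Icc (a + n * L - L) (a + n * L)) := by
      have := hcontOn (n - 1)
      rwa [show (a + ((n : ℤ) - 1 : ℤ) * L : ℝ) = a + n * L - L by push_cast; ring,
        show (a + n * L - L + L : ℝ) = a + n * L by ring] at this
    have hI := hcontOn n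
    have hU : ContinuousOn (deriv v) (Icc (a + n * L - L) (a + n * L + L)) := by
      rw [← Icc_union_Icc_eq_Icc (show a + n * L - L ≤ a + n * L by linarith)
        (show (a + n * L : ℝ) ≤ a + n * L + L by linarith)]
      intro q hq
      have c1 : ContinuousWithinAt (deriv v) (Icc (a + n * L - L) (a + n * L)) q := by
        by_cases h : q ∈ Icc (a + n * L - L) (a + n * L)
        · exact hK q h
        · exact continuousWithinAt_of_notMem_closure (by rwa [isClosed_Icc.closure_eq])
      have c2 : ContinuousWithinAt (deriv v) (Icc (a + n * L) (a + n * L + L)) q := by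
        by_cases h : q ∈ Icc (a + n * L) (a + n * L + L)
        · exact hI q h
        · exact continuousWithinAt_of_notMem_closure (by rwa [isClosed_Icc.closure_eq])
      exact c1.union c2
    exact hU.continuousAt (Icc_mem_nhds (by linarith [hn.1]) hn.2)
  exact contDiff_one_iff_deriv.mpr ⟨hdiff, hcont⟩

end glue

section ftc
variable {v : ℝ → ℝ}

/-- Antiderivative based at `0`. -/
noncomputable def Vfun (v : ℝ → ℝ) : ℝ → ℝ := fun x => ∫ s in (0:ℝ)..x, v s

lemma hasDerivAt_V (hv : Continuous v) (x : ℝ) : HasDerivAt (Vfun v) (v x) x :=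
  intervalIntegral.integral_hasDerivAt_right (hv.intervalIntegrable 0 x)
    (hv.stronglyMeasurableAtFilter _ _) hv.continuousAt

lemma deriv_V (hv : Continuous v) : deriv (Vfun v) = v :=
  funext fun x => (hasDerivAt_V hv x).deriv

lemma contDiff_V (hv : ContDiff ℝ 1 v) : ContDiff ℝ 2 (Vfun v) := by
  rw [show (2 : WithTop ℕ∞) = 1 + 1 by norm_num, contDiff_succ_iff_deriv]
  refine ⟨fun x => (hasDerivAt_V (hv.continuous) x).differentiableAt, ?_, ?_⟩
  · intro h; simp at h
  · rw [deriv_V hv.continuous]; exact hv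

lemma integral_eq_V (hv : Continuous v) (a b : ℝ) :
    ∫ s in a..b, v s = Vfun v b - Vfun v a :=
  (intervalIntegral.integral_interval_sub_left (hv.intervalIntegrable 0 b)
    (hv.intervalIntegrable 0 a)).symm

end ftc

section derivHelpers
variable {f : ℝ → ℝ}

lemma hda_const_add (hf : Differentiable ℝ f) (c s : ℝ) :
    HasDerivAt (fun y => f (c + y)) (deriv f (c + s)) s := by
  simpa [Function.comp_def] using (hf (c + s)).hasDerivAt.comp s ((hasDerivAt_const s c).add (hasDerivAt_id s))

lemma hda_const_sub (hf : Differentiable ℝ f) (c s : ℝ) :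
    HasDerivAt (fun y => f (c - y)) (-deriv f (c - s)) s := by
  simpa [Function.comp_def] using (hf (c - s)).hasDerivAt.comp s ((hasDerivAt_const s c).sub (hasDerivAt_id s))

lemma hda_add_const (hf : Differentiable ℝ f) (c s : ℝ) :
    HasDerivAt (fun y => f (y + c)) (deriv f (s + c)) s := by
  simpa [Function.comp_def] using (hf (s + c)).hasDerivAt.comp s ((hasDerivAt_id s).add (hasDerivAt_const s c))

lemma hda_sub_const (hf : Differentiable ℝ f) (c s : ℝ) :
    HasDerivAt (fun y => f (y - c)) (deriv f (s - c)) s := by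
  simpa [Function.comp_def] using (hf (s - c)).hasDerivAt.comp s ((hasDerivAt_id s).sub (hasDerivAt_const s c))

end derivHelpers

section dalembertFacts

lemma contDiff_two_deriv {F : ℝ → ℝ} (hF : ContDiff ℝ 2 F) : ContDiff ℝ 1 (deriv F) := by
  have := (contDiff_succ_iff_deriv (n := 1)).1 (by
    rw [show (1 : WithTop ℕ∞) + 1 = 2 by norm_num]; exact hF)
  exact this.2.2

lemma waveCheck {F G2 : ℝ → ℝ} (hF : ContDiff ℝ 2 F) (hG : ContDiff ℝ 2 G2) (t x : ℝ) :
    deriv (deriv (fun s => F (x + s) + G2 (x - s))) t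
      = deriv (deriv (fun y => F (y + t) + G2 (y - t))) x := by
  have hFd : Differentiable ℝ F := hF.differentiable (by norm_num)
  have hGd : Differentiable ℝ G2 := hG.differentiable (by norm_num)
  have hF'd : Differentiable ℝ (deriv F) := (contDiff_two_deriv hF).differentiable one_ne_zero
  have hG'd : Differentiable ℝ (deriv G2) := (contDiff_two_deriv hG).differentiable one_ne_zero
  have d1 : deriv (fun s => F (x + s) + G2 (x - s))
      = fun s => deriv F (x + s) + -deriv G2 (x - s) :=
    funext fun s => ((hda_const_add hFd x s).add (hda_const_sub hGd x s)).deriv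
  have d2 : deriv (fun y => F (y + t) + G2 (y - t))
      = fun y => deriv F (y + t) + deriv G2 (y - t) :=
    funext fun y => ((hda_add_const hFd t y).add (hda_sub_const hGd t y)).deriv
  have hB2 : HasDerivAt (fun s => -deriv G2 (x - s)) (deriv (deriv G2) (x - t)) t := by
    have := (hda_const_sub hG'd x t).neg; simp only [neg_neg] at this; exact this
  have e1 := ((hda_const_add hF'd x t).add hB2).deriv
  have e2 := ((hda_add_const hF'd t x).add (hda_sub_const hG'd t x)).deriv
  rw [d1, d2]; exact e1.trans e2.symm

end dalembertFacts

section main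
variable {f0 fT : ℝ → ℝ} {T : ℝ} {v : ℝ → ℝ}

lemma smooth_deriv (hf : ContDiff ℝ (⊤ : ℕ∞) f0) : ContDiff ℝ (↑(⊤:ℕ∞)) (deriv f0) :=
  (contDiff_infty_iff_deriv.mp (hf.of_le (by simp))).2

lemma smooth_le {n : WithTop ℕ∞} (hf : ContDiff ℝ (↑(⊤:ℕ∞)) f0) (hn : n ≠ ⊤) : ContDiff ℝ n f0 :=
  hf.of_le (by
    cases n with
    | top => exact absurd rfl hn
    | coe m => exact_mod_cast le_top)

lemma admissible_contDiff (hT : 0 < T) (hf0 : ContDiff ℝ (⊤ : ℕ∞) f0) (hfT : ContDiff ℝ (⊤ : ℕ∞) fT)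
    (hv : v ∈ admissibleInputs f0 fT T) : ContDiff ℝ 1 v := by
  obtain ⟨hC, hrec, hint, hval, hder⟩ := hv
  have h1 : ContDiff ℝ 1 (deriv f0) := smooth_le (smooth_deriv hf0) (by norm_num)
  have h1T : ContDiff ℝ 1 (deriv fT) := smooth_le (smooth_deriv hfT) (by norm_num)
  have h1d : Differentiable ℝ (deriv f0) := h1.differentiable one_ne_zero
  have h1Td : Differentiable ℝ (deriv fT) := h1T.differentiable one_ne_zero
  set Gr : ℝ → ℝ := fun y => 2 * deriv fT (y + T) - deriv f0 (y + 2*T) - deriv f0 y with hGrdef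
  have hGr : ContDiff ℝ 1 Gr :=
    ((contDiff_const.mul (h1T.comp (contDiff_id.add contDiff_const))).sub
      (h1.comp (contDiff_id.add contDiff_const))).sub h1
  have hrec2T : ∀ y, v (y + 2*T) = v y + Gr y := by
    intro y
    have := hrec (y + T)
    rw [show y + T + T = y + 2*T by ring, show y + T - T = y by ring] at this
    simp only [hGrdef]; linarith
  have hGr' : HasDerivAt Gr
      (2 * deriv (deriv fT) (-T + T) - deriv (deriv f0) (-T + 2*T) - deriv (deriv f0) (-T)) (-T) :=
    (((hda_add_const h1Td T (-T)).const_mul 2).sub (hda_add_const h1d (2*T) (-T))).sub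
      (h1d (-T)).hasDerivAt
  have hGrval : deriv Gr (-T) = 2 * deriv (deriv fT) 0 - deriv (deriv f0) T - deriv (deriv f0) (-T) := by
    rw [hGr'.deriv, show -T + T = 0 by ring, show -T + 2*T = T by ring]
  have h0 : GlueP v Gr (2*T) (-T) := by
    constructor
    · rw [show -T + 2*T = T by ring]; exact hC
    · rw [show -T + 2*T = T by ring, hGrval]; linarith
  exact glue_contDiff (by linarith) hGr hrec2T h0

lemma dAlembert_decomp (hvc : Continuous v) (t x : ℝ) :
    dAlembert f0 v t x
      = (f0 (x + t) + Vfun v (x + t)) / 2 + (f0 (x - t) - Vfun v (x - t)) / 2 := by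
  simp only [dAlembert]; rw [integral_eq_V hvc]; ring

lemma dAlembert_zero (x : ℝ) : dAlembert f0 v 0 x = f0 x := by
  simp [dAlembert]

lemma mapsTo_dAlembert (hT : 0 < T) (hf0 : ContDiff ℝ (⊤ : ℕ∞) f0) (hfT : ContDiff ℝ (⊤ : ℕ∞) fT)
    (hv : v ∈ admissibleInputs f0 fT T) : dAlembert f0 v ∈ tbvpSolutions f0 fT T := by
  have hv1 : ContDiff ℝ 1 v := admissible_contDiff hT hf0 hfT hv
  have hvc : Continuous v := hv1.continuous
  obtain ⟨hC, hrec, hint, hval, hder⟩ := hv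
  have hf02 : ContDiff ℝ 2 f0 := smooth_le (hf0.of_le (by simp)) (by norm_num)
  have hf0d : Differentiable ℝ f0 := hf02.differentiable (by norm_num)
  have hfTd : Differentiable ℝ fT := (hfT.of_le (by simp)).differentiable one_ne_zero
  set F : ℝ → ℝ := fun y => (f0 y + Vfun v y) / 2 with hFdef
  set G2 : ℝ → ℝ := fun y => (f0 y - Vfun v y) / 2 with hG2def
  have hF : ContDiff ℝ 2 F := (hf02.add (contDiff_V hv1)).div_const 2
  have hG2 : ContDiff ℝ 2 G2 := (hf02.sub (contDiff_V hv1)).div_const 2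
  have hFd : Differentiable ℝ F := hF.differentiable (by norm_num)
  have hG2d : Differentiable ℝ G2 := hG2.differentiable (by norm_num)
  have hFder : deriv F = fun y => (deriv f0 y + v y) / 2 :=
    funext fun y => (((hf0d y).hasDerivAt.add (hasDerivAt_V hvc y)).div_const 2).deriv
  have hG2der : deriv G2 = fun y => (deriv f0 y - v y) / 2 :=
    funext fun y => (((hf0d y).hasDerivAt.sub (hasDerivAt_V hvc y)).div_const 2).deriv
  have heq : ∀ t x : ℝ, dAlembert f0 v t x = F (x + t) + G2 (x - t) := by
    intro t x; rw [dAlembert_decomp hvc, hFdef, hG2def]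
  refine ⟨?_, ?_, ?_, ?_⟩
  · have : (fun p : ℝ × ℝ => dAlembert f0 v p.1 p.2)
        = fun p : ℝ × ℝ => F (p.2 + p.1) + G2 (p.2 - p.1) :=
      funext fun p => heq p.1 p.2
    rw [this]
    exact (hF.comp (contDiff_snd.add contDiff_fst)).add (hG2.comp (contDiff_snd.sub contDiff_fst))
  · intro t x
    have e1 : (fun s => dAlembert f0 v s x) = fun s => F (x + s) + G2 (x - s) :=
      funext fun s => heq s x
    have e2 : (fun y => dAlembert f0 v t y) = fun y => F (y + t) + G2 (y - t) :=
      funext fun y => heq t y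
    rw [e1, e2]
    exact waveCheck hF hG2 t x
  · exact dAlembert_zero
  · -- boundary at time T
    set D : ℝ → ℝ := fun x => dAlembert f0 v T x - fT x with hDdef
    have hD0 : D 0 = 0 := by
      simp only [hDdef, dAlembert]
      rw [zero_add, zero_sub, hint]; ring
    have hD' : ∀ x, HasDerivAt D 0 x := by
      intro x
      have h := (hda_add_const hFd T x).add (hda_sub_const hG2d T x)
      have hval2 : deriv F (x + T) + deriv G2 (x - T) = deriv fT x := by
        rw [hFder, hG2der]
        have := hrec x
        simp only []
        linarith
      rw [hval2] at h
      have h2 : HasDerivAt (fun x => dAlembert f0 v T x) (deriv fT x) x := by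
        have e : (fun x => dAlembert f0 v T x) = fun x => F (x + T) + G2 (x - T) :=
          funext fun y => heq T y
        rw [e]; exact h
      have := h2.sub (hfTd x).hasDerivAt; rw [sub_self] at this; exact this
    intro x
    have := is_const_of_deriv_eq_zero (fun y => (hD' y).differentiableAt)
      (fun y => (hD' y).deriv) x 0
    have hx : D x = 0 := by rw [this, hD0]
    simp only [hDdef] at hx
    linarith

lemma surj_rep {u : ℝ → ℝ → ℝ} (hT : 0 < T) (hf0 : ContDiff ℝ (⊤ : ℕ∞) f0) (hfT : ContDiff ℝ (⊤ : ℕ∞) fT)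
    (hu : u ∈ tbvpSolutions f0 fT T) :
    ∃ v ∈ admissibleInputs f0 fT T, dAlembert f0 v = u := by
  obtain ⟨hW, hwave0, hu0, huT⟩ := hu
  set W : ℝ × ℝ → ℝ := fun p => u p.1 p.2 with hWdef
  have hWd : Differentiable ℝ W := hW.differentiable (by norm_num)
  have hwave' : ∀ q : ℝ × ℝ, fderiv ℝ (fderiv ℝ W) q (1, 0) (1, 0)
      = fderiv ℝ (fderiv ℝ W) q (0, 1) (0, 1) := by
    rintro ⟨t, x⟩
    rw [← secondPartial_tt hW t x, ← secondPartial_xx hW t x]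
    exact hwave0 t x
  set v : ℝ → ℝ := fun x => fderiv ℝ W (0, x) (1, 0) with hvdef
  have hv1 : ContDiff ℝ 1 v :=
    (contDiff_fderiv_apply hW (1, 0)).comp (contDiff_const.prodMk contDiff_id)
  have hvc : Continuous v := hv1.continuous
  have hvd : Differentiable ℝ v := hv1.differentiable one_ne_zero
  have e0 : (fun y => u 0 y) = f0 := funext hu0
  have eT : (fun y => u T y) = fT := funext huT
  have hf0x : ∀ y, deriv f0 y = fderiv ℝ W (0, y) (0, 1) := by
    intro y; rw [← e0]; exact (hasDerivAt_partial2 hWd 0 y).deriv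
  have hfTx : ∀ y, deriv fT y = fderiv ℝ W (T, y) (0, 1) := by
    intro y; rw [← eT]; exact (hasDerivAt_partial2 hWd T y).deriv
  have hP := transportP hW hwave'
  have hQ := transportQ hW hwave'
  have he2 : ((1:ℝ), (1:ℝ)) = ((1:ℝ), (0:ℝ)) + ((0:ℝ), (1:ℝ)) := by simp [Prod.ext_iff]
  have he3 : ((1:ℝ), (-1:ℝ)) = ((1:ℝ), (0:ℝ)) - ((0:ℝ), (1:ℝ)) := by simp [Prod.ext_iff]
  have P0 : ∀ y, fderiv ℝ W (0, y) (1, 1) = v y + deriv f0 y := by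
    intro y; rw [he2, map_add, hf0x, hvdef]
  have Q0 : ∀ y, fderiv ℝ W (0, y) (1, -1) = v y - deriv f0 y := by
    intro y; rw [he3, map_sub, hf0x, hvdef]
  -- the representation u = dAlembert f0 v
  have hf02 : ContDiff ℝ 2 f0 := smooth_le (hf0.of_le (by simp)) (by norm_num)
  have hf0d : Differentiable ℝ f0 := hf02.differentiable (by norm_num)
  set F : ℝ → ℝ := fun y => (f0 y + Vfun v y) / 2 with hFdef
  set G2 : ℝ → ℝ := fun y => (f0 y - Vfun v y) / 2 with hG2def
  have hF : ContDiff ℝ 2 F := (hf02.add (contDiff_V hv1)).div_const 2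
  have hG2 : ContDiff ℝ 2 G2 := (hf02.sub (contDiff_V hv1)).div_const 2
  have hFd : Differentiable ℝ F := hF.differentiable (by norm_num)
  have hG2d : Differentiable ℝ G2 := hG2.differentiable (by norm_num)
  have hFder : deriv F = fun y => (deriv f0 y + v y) / 2 :=
    funext fun y => (((hf0d y).hasDerivAt.add (hasDerivAt_V hvc y)).div_const 2).deriv
  have hG2der : deriv G2 = fun y => (deriv f0 y - v y) / 2 :=
    funext fun y => (((hf0d y).hasDerivAt.sub (hasDerivAt_V hvc y)).div_const 2).deriv
  have heq : ∀ t x : ℝ, dAlembert f0 v t x = F (x + t) + G2 (x - t) := by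
    intro t x; rw [dAlembert_decomp hvc, hFdef, hG2def]
  have hrep : ∀ t x : ℝ, u t x = dAlembert f0 v t x := by
    intro t x
    have hD' : ∀ s : ℝ, HasDerivAt (fun s => u s x - dAlembert f0 v s x) 0 s := by
      intro s
      have hut : HasDerivAt (fun s => u s x) (fderiv ℝ W (s, x) (1, 0)) s :=
        hasDerivAt_partial1 hWd s x
      have hdA0 : HasDerivAt (fun s => dAlembert f0 v s x)
          (deriv F (x + s) + -deriv G2 (x - s)) s := by
        have e : (fun s => dAlembert f0 v s x) = fun s => F (x + s) + G2 (x - s) :=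
          funext fun s => heq s x
        rw [e]
        exact (hda_const_add hFd x s).add (hda_const_sub hG2d x s)
      have hcomb := hut.sub hdA0
      have E : fderiv ℝ W (s, x) (1, 0) - (deriv F (x + s) + -deriv G2 (x - s)) = 0 := by
        rw [decomp1 hWd, hP s x, hQ s x, P0, Q0, hFder, hG2der]
        ring
      rwa [E] at hcomb
    have hconst := is_const_of_deriv_eq_zero (fun y => (hD' y).differentiableAt)
      (fun y => (hD' y).deriv) t 0
    have h0 : u 0 x - dAlembert f0 v 0 x = 0 := by
      rw [hu0 x, dAlembert_zero]; ring
    have := hconst.trans h0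
    linarith [this]
  -- the recurrence for v
  have hrecv : ∀ x : ℝ, v (x + T)
      = v (x - T) + 2 * deriv fT x - deriv f0 (x + T) - deriv f0 (x - T) := by
    intro x
    have hPT : fderiv ℝ W (T, x) (1, 1) = v (x + T) + deriv f0 (x + T) := by
      rw [hP T x, P0]
    have hQT : fderiv ℝ W (T, x) (1, -1) = v (x - T) - deriv f0 (x - T) := by
      rw [hQ T x, Q0]
    have hd2 := decomp2 hWd (T, x)
    rw [hPT, hQT, ← hfTx x] at hd2
    linarith
  -- derivative facts about f0, fT
  have h1 : ContDiff ℝ 1 (deriv f0) := smooth_le (smooth_deriv hf0) (by norm_num)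
  have h1T : ContDiff ℝ 1 (deriv fT) := smooth_le (smooth_deriv hfT) (by norm_num)
  have h1d : Differentiable ℝ (deriv f0) := h1.differentiable one_ne_zero
  have h1Td : Differentiable ℝ (deriv fT) := h1T.differentiable one_ne_zero
  refine ⟨v, ⟨hv1.contDiffOn, hrecv, ?_, ?_, ?_⟩, ?_⟩
  · -- integral condition
    have := hrep T 0
    rw [huT 0] at this
    simp only [dAlembert] at this
    rw [zero_add, zero_sub] at this
    linarith
  · -- endpoint value condition
    have := hrecv 0
    rwa [zero_add, zero_sub] at this
  · -- endpoint derivative condition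
    have hfe : (fun x => v (x + T))
        = fun x => v (x - T) + 2 * deriv fT x - deriv f0 (x + T) - deriv f0 (x - T) :=
      funext hrecv
    have hL : HasDerivAt (fun x => v (x + T)) (deriv v (0 + T)) 0 := hda_add_const hvd T 0
    have hR : HasDerivAt
        (fun x => v (x - T) + 2 * deriv fT x - deriv f0 (x + T) - deriv f0 (x - T))
        (deriv v (0 - T) + 2 * deriv (deriv fT) 0 - deriv (deriv f0) (0 + T)
          - deriv (deriv f0) (0 - T)) 0 :=
      (((hda_sub_const hvd T 0).add (((h1Td 0).hasDerivAt).const_mul 2)).sub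
        (hda_add_const h1d T 0)).sub (hda_sub_const h1d T 0)
    rw [hfe] at hL
    have huni := hL.unique hR
    rw [zero_add, zero_sub] at huni
    have hudi := uniqueDiffOn_Icc (show -T < T by linarith)
    have d1 : derivWithin v (Set.Icc (-T) T) T = deriv v T :=
      (hvd T).derivWithin (hudi.uniqueDiffWithinAt ⟨by linarith, le_rfl⟩)
    have d2 : derivWithin v (Set.Icc (-T) T) (-T) = deriv v (-T) :=
      (hvd (-T)).derivWithin (hudi.uniqueDiffWithinAt ⟨le_rfl, by linarith⟩)
    rw [d1, d2]
    linarith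
  · funext t x
    exact (hrep t x).symm

lemma inj_dAlembert (hT : 0 < T) (hf0 : ContDiff ℝ (⊤ : ℕ∞) f0) (hfT : ContDiff ℝ (⊤ : ℕ∞) fT)
    {w : ℝ → ℝ} (hv : v ∈ admissibleInputs f0 fT T) (hw : w ∈ admissibleInputs f0 fT T)
    (h : dAlembert f0 v = dAlembert f0 w) : v = w := by
  have hvc : Continuous v := (admissible_contDiff hT hf0 hfT hv).continuous
  have hwc : Continuous w := (admissible_contDiff hT hf0 hfT hw).continuous
  have hVW : ∀ z : ℝ, Vfun v z = Vfun w z := by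
    intro z
    have := congrFun (congrFun h (z/2)) (z/2)
    simp only [dAlembert] at this
    rw [sub_self, add_halves] at this
    have hint : (∫ s in (0:ℝ)..z, v s) = ∫ s in (0:ℝ)..z, w s := by linarith
    simpa [Vfun] using hint
  funext x
  rw [← (hasDerivAt_V hvc x).deriv, ← (hasDerivAt_V hwc x).deriv, funext hVW]

section sine

noncomputable def sfun (T : ℝ) : ℝ → ℝ := fun x => Real.sin (Real.pi * x / T)

lemma sfun_contDiff : ContDiff ℝ 1 (sfun T) :=
  Real.contDiff_sin.comp ((contDiff_const.mul contDiff_id).div_const T)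

lemma sfun_hasDerivAt (x : ℝ) :
    HasDerivAt (sfun T) (Real.cos (Real.pi * x / T) * (Real.pi / T)) x := by
  have hin : HasDerivAt (fun x : ℝ => Real.pi * x / T) (Real.pi / T) x := by
    simpa using ((hasDerivAt_id x).const_mul Real.pi).div_const T
  have := (Real.hasDerivAt_sin (Real.pi * x / T)).comp x hin; simp only [Function.comp_def] at this; exact this

lemma sfun_add (hT : 0 < T) (x : ℝ) : sfun T (x + T) = -Real.sin (Real.pi * x / T) := by
  rw [sfun, show Real.pi * (x + T) / T = Real.pi * x / T + Real.pi by field_simp,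
    Real.sin_add_pi]

lemma sfun_sub (hT : 0 < T) (x : ℝ) : sfun T (x - T) = -Real.sin (Real.pi * x / T) := by
  rw [sfun, show Real.pi * (x - T) / T = Real.pi * x / T - Real.pi by field_simp,
    Real.sin_sub_pi]

lemma sfun_T (hT : 0 < T) : sfun T T = 0 := by
  rw [sfun, show Real.pi * T / T = Real.pi by field_simp, Real.sin_pi]

lemma sfun_negT (hT : 0 < T) : sfun T (-T) = 0 := by
  rw [sfun, show Real.pi * (-T) / T = -Real.pi by field_simp, Real.sin_neg, Real.sin_pi, neg_zero]

lemma sfun_half (hT : 0 < T) : sfun T (T/2) = 1 := by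
  rw [sfun, show Real.pi * (T/2) / T = Real.pi / 2 by field_simp, Real.sin_pi_div_two]

lemma sfun_integral (hT : 0 < T) : (∫ x in (-T)..T, sfun T x) = 0 := by
  have hA : ∀ x : ℝ, HasDerivAt (fun y => -(T / Real.pi) * Real.cos (Real.pi * y / T))
      (sfun T x) x := by
    intro x
    have hin : HasDerivAt (fun y : ℝ => Real.pi * y / T) (Real.pi / T) x := by
      simpa using ((hasDerivAt_id x).const_mul Real.pi).div_const T
    have := ((Real.hasDerivAt_cos (Real.pi * x / T)).comp x hin).const_mul (-(T / Real.pi))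
    have hv : -(T / Real.pi) * (-Real.sin (Real.pi * x / T) * (Real.pi / T))
        = sfun T x := by
      rw [sfun]; field_simp
    rwa [hv] at this
  rw [intervalIntegral.integral_eq_sub_of_hasDerivAt (fun x _ => hA x)
    ((sfun_contDiff.continuous).intervalIntegrable _ _)]
  rw [show Real.pi * T / T = Real.pi by field_simp,
    show Real.pi * (-T) / T = -Real.pi by field_simp, Real.cos_neg]
  ring

end sine

lemma adm_shift (hT : 0 < T) (hf0 : ContDiff ℝ (⊤ : ℕ∞) f0) (hfT : ContDiff ℝ (⊤ : ℕ∞) fT)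
    (hv : v ∈ admissibleInputs f0 fT T) (c : ℝ) :
    (fun x => v x + c * sfun T x) ∈ admissibleInputs f0 fT T := by
  have hv1 : ContDiff ℝ 1 v := admissible_contDiff hT hf0 hfT hv
  obtain ⟨hC, hrec, hint, hval, hder⟩ := hv
  have hs1 : ContDiff ℝ 1 (fun x => c * sfun T x) := contDiff_const.mul sfun_contDiff
  have hsum : ContDiff ℝ 1 (fun x => v x + c * sfun T x) := hv1.add hs1
  have hsumd : Differentiable ℝ (fun x => v x + c * sfun T x) := hsum.differentiable one_ne_zero
  have hvd : Differentiable ℝ v := hv1.differentiable one_ne_zero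
  have hudi := uniqueDiffOn_Icc (show -T < T by linarith)
  have hdsum : ∀ x, deriv (fun x => v x + c * sfun T x) x
      = deriv v x + c * (Real.cos (Real.pi * x / T) * (Real.pi / T)) :=
    fun x => ((hvd x).hasDerivAt.add ((sfun_hasDerivAt x).const_mul c)).deriv
  refine ⟨hsum.contDiffOn, ?_, ?_, ?_, ?_⟩
  · intro x
    simp only [sfun_add hT, sfun_sub hT]
    have := hrec x
    linarith
  · rw [intervalIntegral.integral_add (hv1.continuous.intervalIntegrable _ _)
      ((hs1.continuous).intervalIntegrable _ _),
      intervalIntegral.integral_const_mul, sfun_integral hT]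
    simpa using hint
  · simp only [sfun_T hT, sfun_negT hT]
    simpa using hval
  · have d1 : derivWithin v (Set.Icc (-T) T) T = deriv v T :=
      (hvd T).derivWithin (hudi.uniqueDiffWithinAt ⟨by linarith, le_rfl⟩)
    have d2 : derivWithin v (Set.Icc (-T) T) (-T) = deriv v (-T) :=
      (hvd (-T)).derivWithin (hudi.uniqueDiffWithinAt ⟨le_rfl, by linarith⟩)
    have d3 : derivWithin (fun x => v x + c * sfun T x) (Set.Icc (-T) T) T
        = deriv (fun x => v x + c * sfun T x) T :=
      (hsumd T).derivWithin (hudi.uniqueDiffWithinAt ⟨by linarith, le_rfl⟩)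
    have d4 : derivWithin (fun x => v x + c * sfun T x) (Set.Icc (-T) T) (-T)
        = deriv (fun x => v x + c * sfun T x) (-T) :=
      (hsumd (-T)).derivWithin (hudi.uniqueDiffWithinAt ⟨le_rfl, by linarith⟩)
    rw [d3, d4, hdsum, hdsum]
    rw [d1, d2] at hder
    rw [show Real.pi * (-T) / T = -Real.pi by field_simp, Real.cos_neg,
      show Real.pi * T / T = Real.pi by field_simp]
    linarith

end main


theorem stmt_19 (f0 fT : ℝ → ℝ) (T : ℝ) (hT : 0 < T)
    (hf0 : ContDiff ℝ (⊤ : ℕ∞) f0) (hfT : ContDiff ℝ (⊤ : ℕ∞) fT) :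
    Set.BijOn (dAlembert f0) (admissibleInputs f0 fT T) (tbvpSolutions f0 fT T) ∧
    ((tbvpSolutions f0 fT T).Nonempty → (tbvpSolutions f0 fT T).Infinite) := by
  constructor
  · refine ⟨fun v hv => mapsTo_dAlembert hT hf0 hfT hv,
      fun v hv w hw h => inj_dAlembert hT hf0 hfT hv hw h, ?_⟩
    intro u hu
    obtain ⟨v, hva, he⟩ := surj_rep hT hf0 hfT hu
    exact ⟨v, hva, he⟩
  · rintro ⟨u, hu⟩
    obtain ⟨v0, hv0, -⟩ := surj_rep hT hf0 hfT hu
    apply Set.infinite_of_injective_forall_mem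
      (f := fun c : ℝ => dAlembert f0 (fun x => v0 x + c * sfun T x))
    · intro c c' h
      have h2 := inj_dAlembert hT hf0 hfT (adm_shift hT hf0 hfT hv0 c)
        (adm_shift hT hf0 hfT hv0 c') h
      have h3 := congrFun h2 (T/2)
      simp only [sfun_half hT] at h3
      linarith
    · intro c; exact mapsTo_dAlembert hT hf0 hfT (adm_shift hT hf0 hfT hv0 c)
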